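/- Let G(x,y) be the graph on vertices u_0,...,u_b, v_0,...,v_b where: u_0 u_i is an edge iff x_i = 0, v_0 v_i is an edge iff y_i = 0, and u_j v_j is an edge for all 0 ≤ j ≤ b. Then G(x,y) is connected if and only if the sets {i : x_i = 1} and {i : y_i = 1} are disjoint. -/
import Mathlib


/-- The graph `G(x,y)` on vertices `u_0,…,u_b` (as `(false, j)`) and `v_0,…,v_b`
(as `(true, j)`), with edges `u_0 u_i` iff `x i = 0`, `v_0 v_i` iff `y i = 0`,
and `u_j v_j` for all `0 ≤ j ≤ b`.  (Here `i : Fin b` names index `i+1 ∈ {1,…,b}`.) -/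
def disjGraph (b : ℕ) (x y : Fin b → Bool) : SimpleGraph (Bool × Fin (b + 1)) :=
  SimpleGraph.fromRel (fun a c =>
    (∃ i : Fin b, a = (false, 0) ∧ c = (false, i.succ) ∧ x i = false) ∨
    (∃ i : Fin b, a = (true, 0) ∧ c = (true, i.succ) ∧ y i = false) ∨
    (∃ j : Fin (b + 1), a = (false, j) ∧ c = (true, j)))

lemma disjGraph_adj_u0_ui (b : ℕ) (x y : Fin b → Bool) (i : Fin b) (hx : x i = false) :
    (disjGraph b x y).Adj (false, 0) (false, i.succ) := by
  refine ⟨?_, Or.inl (Or.inl ⟨i, rfl, rfl, hx⟩)⟩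
  simp [Prod.ext_iff, (Fin.succ_ne_zero i).symm]

lemma disjGraph_adj_v0_vi (b : ℕ) (x y : Fin b → Bool) (i : Fin b) (hy : y i = false) :
    (disjGraph b x y).Adj (true, 0) (true, i.succ) := by
  refine ⟨?_, Or.inl (Or.inr (Or.inl ⟨i, rfl, rfl, hy⟩))⟩
  simp [Prod.ext_iff, (Fin.succ_ne_zero i).symm]

lemma disjGraph_adj_uj_vj (b : ℕ) (x y : Fin b → Bool) (j : Fin (b + 1)) :
    (disjGraph b x y).Adj (false, j) (true, j) := by
  refine ⟨?_, Or.inl (Or.inr (Or.inr ⟨j, rfl, rfl⟩))⟩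
  simp [Prod.ext_iff]

/-- If `x i = y i = true`, then adjacency preserves "second component = i.succ". -/
lemma disjGraph_closed (b : ℕ) (x y : Fin b → Bool) (i : Fin b)
    (hx : x i = true) (hy : y i = true) {a c : Bool × Fin (b + 1)}
    (h : (disjGraph b x y).Adj a c) (ha : a.2 = i.succ) : c.2 = i.succ := by
  rcases h with ⟨hne, h | h⟩
  · rcases h with ⟨k, h1, h2, h3⟩ | ⟨k, h1, h2, h3⟩ | ⟨j, h1, h2⟩
    · rw [h1] at ha; exact absurd ha.symm (Fin.succ_ne_zero i)
    · rw [h1] at ha; exact absurd ha.symm (Fin.succ_ne_zero i)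
    · rw [h2]; rw [h1] at ha; exact ha
  · rcases h with ⟨k, h1, h2, h3⟩ | ⟨k, h1, h2, h3⟩ | ⟨j, h1, h2⟩
    · rw [h2] at ha
      have : k = i := Fin.succ_injective _ ha
      rw [this, hx] at h3; exact absurd h3 (by simp)
    · rw [h2] at ha
      have : k = i := Fin.succ_injective _ ha
      rw [this, hy] at h3; exact absurd h3 (by simp)
    · rw [h1]; rw [h2] at ha; exact ha

/-- `G(x,y)` is connected iff the sets `{i : x_i = 1}` and `{i : y_i = 1}` are disjoint. -/
theorem stmt_8 (b : ℕ) (x y : Fin b → Bool) :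
    (disjGraph b x y).Connected ↔ ∀ i : Fin b, ¬(x i = true ∧ y i = true) := by
  constructor
  · rintro h i ⟨hx, hy⟩
    obtain ⟨w⟩ := h.preconnected (false, i.succ) (false, 0)
    have key : ∀ {a c : Bool × Fin (b + 1)} (w : (disjGraph b x y).Walk a c),
        a.2 = i.succ → c.2 = i.succ := by
      intro a c w
      induction w with
      | nil => exact id
      | cons h _ ih => intro ha; exact ih (disjGraph_closed b x y i hx hy h ha)
    exact Fin.succ_ne_zero i (key w rfl).symm
  · intro h
    have reach : ∀ v : Bool × Fin (b + 1), (disjGraph b x y).Reachable v (false, 0) := by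
      rintro ⟨bl, j⟩
      induction j using Fin.cases with
      | zero =>
        cases bl
        · exact SimpleGraph.Reachable.refl _
        · exact (disjGraph_adj_uj_vj b x y 0).reachable.symm
      | succ i =>
        have base : (disjGraph b x y).Reachable (true, 0) (false, 0) :=
          (disjGraph_adj_uj_vj b x y 0).reachable.symm
        cases hx : x i with
        | false =>
          have r1 : (disjGraph b x y).Reachable (false, i.succ) (false, 0) :=
            (disjGraph_adj_u0_ui b x y i hx).reachable.symm
          cases bl
          · exact r1
          · exact ((disjGraph_adj_uj_vj b x y i.succ).reachable.symm).trans r1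
        | true =>
          have hy : y i = false := by
            cases hyc : y i with
            | false => rfl
            | true => exact absurd ⟨hx, hyc⟩ (h i)
          have r2 : (disjGraph b x y).Reachable (true, i.succ) (false, 0) :=
            ((disjGraph_adj_v0_vi b x y i hy).reachable.symm).trans base
          cases bl
          · exact ((disjGraph_adj_uj_vj b x y i.succ).reachable).trans r2
          · exact r2
    exact ⟨fun a c => (reach a).trans (reach c).symm⟩
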